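/- arXiv:1203.3304 — 2 statements merged into one kernel-verified Lean document; each statement's English description precedes it below -/
import Mathlib

section
/- Let n ≥ 1, and let γ, v : ℝ → ℝⁿ be continuously differentiable and 2π-periodic, with γ′(s) ≠ 0 for all s. Then the length function L(t) = ∫₀^{2π} ‖γ′(s) + t·v′(s)‖ ds is differentiable at t = 0 with L′(0) = ∫₀^{2π} ⟨γ′(s), v′(s)⟩ / ‖γ′(s)‖ ds. (This is the first variation of length of a closed curve under the variation γ + t·v, the m = 1 case of the first variation of area −∫_S m·H·v.) -/
/-! The length is differentiated under the integral sign. For each `s`, the integrand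
`t ↦ ‖γ′ s + t • v′ s‖` is `‖v′ s‖`-Lipschitz, which gives an integrable dominating bound, and
since `γ′ s ≠ 0` it is differentiable at `0` with derivative `⟪γ′ s, v′ s⟫ / ‖γ′ s‖`. -/

open Real
open scoped RealInnerProductSpace
open MeasureTheory
open scoped Interval

section

variable {E : Type*} [NormedAddCommGroup E] [InnerProductSpace ℝ E]

theorem HasDerivAt.norm {f : ℝ → E} {f' : E} {x : ℝ} (hf : HasDerivAt f f' x) (h0 : f x ≠ 0) :
    HasDerivAt (‖f ·‖) (⟪f x, f'⟫ / ‖f x‖) x := by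
  have hsq := hf.norm_sq.sqrt (pow_ne_zero 2 (norm_ne_zero_iff.mpr h0))
  simp only [Real.sqrt_sq (norm_nonneg _)] at hsq
  convert hsq using 1
  field_simp

theorem lipschitzWith_norm_add_smul (a b : E) : LipschitzWith ‖b‖₊ fun t : ℝ => ‖a + t • b‖ :=
  LipschitzWith.of_dist_le_mul fun t t' =>
    calc dist ‖a + t • b‖ ‖a + t' • b‖ ≤ ‖(a + t • b) - (a + t' • b)‖ := dist_norm_norm_le _ _
      _ = ‖b‖ * dist t t' := by
        rw [add_sub_add_left_eq_sub, ← sub_smul, norm_smul, Real.dist_eq, Real.norm_eq_abs,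
          mul_comm]

theorem hasDerivAt_intervalIntegral_norm_add_smul {f g : ℝ → E} {a b : ℝ} {μ : Measure ℝ}
    (hf : IntervalIntegrable f μ a b) (hg : IntervalIntegrable g μ a b)
    (h0 : ∀ᵐ s ∂μ, s ∈ Ι a b → f s ≠ 0) :
    HasDerivAt (fun t : ℝ => ∫ s in a..b, ‖f s + t • g s‖ ∂μ)
      (∫ s in a..b, ⟪f s, g s⟫ / ‖f s‖ ∂μ) 0 := by
  have hF : ∀ t : ℝ, IntervalIntegrable (fun s => ‖f s + t • g s‖) μ a b := fun t =>
    (hf.add (hg.smul t)).norm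
  refine (intervalIntegral.hasDerivAt_integral_of_dominated_loc_of_lip (bound := (‖g ·‖))
    Filter.univ_mem (.of_forall fun t => (hF t).def'.aestronglyMeasurable) (hF 0) ?_
    (.of_forall fun s _ => ?_) hg.norm ?_).2
  · have hf' := hf.def'.aestronglyMeasurable
    exact (hf'.inner hg.def'.aestronglyMeasurable).div₀ hf'.norm
  · rw [Real.nnabs_of_nonneg (norm_nonneg _), norm_toNNReal]
    exact (lipschitzWith_norm_add_smul (f s) (g s)).lipschitzOnWith
  · filter_upwards [h0] with s hs hsab
    have hline : HasDerivAt (fun t : ℝ => f s + t • g s) (g s) 0 := by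
      simpa using ((hasDerivAt_id (0 : ℝ)).smul_const (g s)).const_add (f s)
    simpa using hline.norm (by simpa using hs hsab)

end

theorem first_variation_of_length_general
    (n : ℕ) (γ v : ℝ → EuclideanSpace ℝ (Fin n))
    (hγ : ContDiff ℝ 1 γ) (hv : ContDiff ℝ 1 v)
    (hγ' : ∀ s, deriv γ s ≠ 0) :
    HasDerivAt (fun t : ℝ => ∫ s in (0:ℝ)..(2 * π), ‖deriv γ s + t • deriv v s‖)
      (∫ s in (0:ℝ)..(2 * π), ⟪deriv γ s, deriv v s⟫ / ‖deriv γ s‖) 0 :=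
  hasDerivAt_intervalIntegral_norm_add_smul
    ((hγ.continuous_deriv le_rfl).intervalIntegrable _ _)
    ((hv.continuous_deriv le_rfl).intervalIntegrable _ _)
    (.of_forall fun s _ => hγ' s)

/-- First variation of length of a closed curve: for `γ, v : ℝ → ℝⁿ` C¹ and
`2π`-periodic with `γ′` nonvanishing, `L(t) = ∫₀^{2π} ‖γ′ + t·v′‖` is
differentiable at `0` with `L′(0) = ∫₀^{2π} ⟨γ′, v′⟩/‖γ′‖`. -/
theorem first_variation_of_length
    (n : ℕ) (hn : 1 ≤ n) (γ v : ℝ → EuclideanSpace ℝ (Fin n))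
    (hγ : ContDiff ℝ 1 γ) (hv : ContDiff ℝ 1 v)
    (hγp : Function.Periodic γ (2 * π)) (hvp : Function.Periodic v (2 * π))
    (hγ' : ∀ s, deriv γ s ≠ 0) :
    HasDerivAt (fun t : ℝ => ∫ s in (0:ℝ)..(2 * π), ‖deriv γ s + t • deriv v s‖)
      (∫ s in (0:ℝ)..(2 * π), ⟪deriv γ s, deriv v s⟫ / ‖deriv γ s‖) 0 :=
  first_variation_of_length_general n γ v hγ hv hγ'
end

section
/- Let γ, v : ℝ → ℝ² be continuously differentiable and 2π-periodic, and write γ = (γ₁, γ₂), v = (v₁, v₂). Define the signed area A(t) = (1/2)·∫₀^{2π} ((γ₁ + t·v₁)·(γ₂′ + t·v₂′) − (γ₂ + t·v₂)·(γ₁′ + t·v₁′)) ds. Then A is differentiable at t = 0 with A′(0) = ∫₀^{2π} (v₁(s)·γ₂′(s) − v₂(s)·γ₁′(s)) ds. (This is the first variation of enclosed ω-volume for a closed plane curve, dV/dt = ∫_S (dω ⌟ T)(v) in the case m = 1, n = 2, dω the standard area form.) -/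
/-!
Expanding the integrand in `t` gives `A(t) = ½ (B(γ, γ) + t (B(γ, v) + B(v, γ)) + t² B(v, v))` with
`B(x, y) = ∫ (x₁ y₂′ − x₂ y₁′)`, so `A′(0) = ½ (B(γ, v) + B(v, γ))`. For closed curves `B` is
symmetric: `B(γ, v) − B(v, γ)` is the integral of `(γ₁ v₂ − γ₂ v₁)′` over a period, which vanishes.
-/

open Real intervalIntegral

theorem hasDerivAt_intervalIntegral_add_mul_add_sq_mul {f g h : ℝ → ℝ} {a b : ℝ}
    (hf : IntervalIntegrable f MeasureTheory.volume a b)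
    (hg : IntervalIntegrable g MeasureTheory.volume a b)
    (hh : IntervalIntegrable h MeasureTheory.volume a b) (t : ℝ) :
    HasDerivAt (fun t => ∫ s in a..b, (f s + t * g s + t ^ 2 * h s))
      ((∫ s in a..b, g s) + 2 * t * ∫ s in a..b, h s) t := by
  have hpoly : (fun t => ∫ s in a..b, (f s + t * g s + t ^ 2 * h s)) =
      fun t => (∫ s in a..b, f s) + t * (∫ s in a..b, g s) + t ^ 2 * ∫ s in a..b, h s := by
    funext t
    rw [integral_add (hf.add (hg.const_mul t)) (hh.const_mul _), integral_add hf (hg.const_mul t),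
      integral_const_mul, integral_const_mul]
  rw [hpoly]
  refine ((((hasDerivAt_id' t).mul_const _).const_add _).add
    ((hasDerivAt_pow 2 t).mul_const _)).congr_deriv ?_
  push_cast
  ring

theorem integral_mul_deriv_sub_mul_deriv_comm_of_periodic {x₁ x₂ y₁ y₂ : ℝ → ℝ} {T : ℝ}
    (hx₁ : ContDiff ℝ 1 x₁) (hx₂ : ContDiff ℝ 1 x₂) (hy₁ : ContDiff ℝ 1 y₁) (hy₂ : ContDiff ℝ 1 y₂)
    (hx₁p : Function.Periodic x₁ T) (hx₂p : Function.Periodic x₂ T)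
    (hy₁p : Function.Periodic y₁ T) (hy₂p : Function.Periodic y₂ T) :
    ∫ s in (0 : ℝ)..T, (x₁ s * deriv y₂ s - x₂ s * deriv y₁ s) =
      ∫ s in (0 : ℝ)..T, (y₁ s * deriv x₂ s - y₂ s * deriv x₁ s) := by
  have hderiv : ∀ s ∈ Set.uIcc 0 T, HasDerivAt (fun s => x₁ s * y₂ s - x₂ s * y₁ s)
      (deriv x₁ s * y₂ s + x₁ s * deriv y₂ s - (deriv x₂ s * y₁ s + x₂ s * deriv y₁ s)) s :=
    fun s _ => ((hx₁.differentiable one_ne_zero s).hasDerivAt.mul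
      (hy₂.differentiable one_ne_zero s).hasDerivAt).sub
      ((hx₂.differentiable one_ne_zero s).hasDerivAt.mul
      (hy₁.differentiable one_ne_zero s).hasDerivAt)
  have hboundary :=
    integral_eq_sub_of_hasDerivAt hderiv (Continuous.intervalIntegrable (by fun_prop) _ _)
  rw [hx₁p.eq, hx₂p.eq, hy₁p.eq, hy₂p.eq, sub_self] at hboundary
  rw [← sub_eq_zero, ← integral_sub (Continuous.intervalIntegrable (by fun_prop) _ _)
    (Continuous.intervalIntegrable (by fun_prop) _ _), ← hboundary]
  congr 1 with s
  ring

/-- First variation of the signed area enclosed by a closed plane curve: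
for `γ = (γ₁, γ₂)`, `v = (v₁, v₂)` C¹ and `2π`-periodic,
`A(t) = (1/2)∫₀^{2π} ((γ₁+t·v₁)(γ₂′+t·v₂′) − (γ₂+t·v₂)(γ₁′+t·v₁′))` is
differentiable at `0` with `A′(0) = ∫₀^{2π} (v₁·γ₂′ − v₂·γ₁′)`. -/
theorem first_variation_of_signed_area
    (γ₁ γ₂ v₁ v₂ : ℝ → ℝ)
    (hγ₁ : ContDiff ℝ 1 γ₁) (hγ₂ : ContDiff ℝ 1 γ₂)
    (hv₁ : ContDiff ℝ 1 v₁) (hv₂ : ContDiff ℝ 1 v₂)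
    (hγ₁p : Function.Periodic γ₁ (2 * π)) (hγ₂p : Function.Periodic γ₂ (2 * π))
    (hv₁p : Function.Periodic v₁ (2 * π)) (hv₂p : Function.Periodic v₂ (2 * π)) :
    HasDerivAt (fun t : ℝ => (1 / 2) * ∫ s in (0:ℝ)..(2 * π),
        ((γ₁ s + t * v₁ s) * (deriv γ₂ s + t * deriv v₂ s) -
          (γ₂ s + t * v₂ s) * (deriv γ₁ s + t * deriv v₁ s)))
      (∫ s in (0:ℝ)..(2 * π), (v₁ s * deriv γ₂ s - v₂ s * deriv γ₁ s)) 0 := by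
  have hsymm := integral_mul_deriv_sub_mul_deriv_comm_of_periodic hγ₁ hγ₂ hv₁ hv₂
    hγ₁p hγ₂p hv₁p hv₂p
  have hquad := (hasDerivAt_intervalIntegral_add_mul_add_sq_mul
    (f := fun s => γ₁ s * deriv γ₂ s - γ₂ s * deriv γ₁ s)
    (g := fun s =>
      (γ₁ s * deriv v₂ s - γ₂ s * deriv v₁ s) + (v₁ s * deriv γ₂ s - v₂ s * deriv γ₁ s))
    (h := fun s => v₁ s * deriv v₂ s - v₂ s * deriv v₁ s) (a := 0) (b := 2 * π)
    (Continuous.intervalIntegrable (by fun_prop) _ _)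
    (Continuous.intervalIntegrable (by fun_prop) _ _)
    (Continuous.intervalIntegrable (by fun_prop) _ _) 0).const_mul (1 / 2 : ℝ)
  refine (hquad.congr_deriv ?_).congr_of_eventuallyEq (Filter.Eventually.of_forall fun t => ?_)
  · rw [integral_add (Continuous.intervalIntegrable (by fun_prop) _ _)
      (Continuous.intervalIntegrable (by fun_prop) _ _), hsymm]
    ring
  · beta_reduce
    congr 1
    exact integral_congr fun s _ => by ring
end
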